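/- Let f(x) ∈ ℤ[x] be a polynomial of degree d ≥ 2 that is indecomposable in ℚ[x]. Then there exists a constant γ_d > 0 depending only on d such that for every prime number p with p > γ_d · ‖f‖_∞^d, the reduction of f modulo p is indecomposable in F̄_p[x] (the polynomial ring over an algebraic closure of the field with p elements). -/

import Mathlib

/-!
If `f = u ∘ g` over `F̄_p` with `deg u = a`, `deg g = b` and `g` monic, then `g` is determined up
to an additive constant by the top `b` coefficients of `f`: it is the approximate `a`-th root of
`f / lc f` (this needs `p ∤ a`). Over `ℤ` we build that root `G` for the rescaled polynomial
`F(x) = s^(ab) f(x / s)`, `s = a² lc f`, which makes `G` integral with its coefficient of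
`X^(b-i)` of size `O(Mⁱ)`, `M = a² ‖f‖_∞`. Expanding `F` greedily in powers of `G` leaves a
remainder `R` that vanishes iff `F ∈ ℚ[G]`; as `f` is indecomposable over `ℚ`, `R ≠ 0`. Its
leading coefficient `N` is a nonzero integer with `|N| ≪ ‖f‖_∞^(ab)`, while a decomposition
modulo `p` makes the reduction of `R` vanish, so `p ∣ N`.
-/

open Polynomial

/-- A one-variable polynomial over a field is indecomposable if it is non-constant and
cannot be written as `u ∘ g` with both `u` and `g` of degree at least 2. -/
def IndecomposablePoly {K : Type*} [Field K] (f : K[X]) : Prop :=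
  0 < f.natDegree ∧
    ¬ ∃ u g : K[X], 2 ≤ u.natDegree ∧ 2 ≤ g.natDegree ∧ f = u.comp g

/-- The sup-norm `‖f‖_∞` of an integer polynomial: the maximum of the absolute values of its
coefficients. -/
def intMaxNorm (f : Polynomial ℤ) : ℕ :=
  f.support.sup fun i => (f.coeff i).natAbs

open Finset

namespace Polynomial

section CommRing

variable {R : Type*} [CommRing R]

theorem Monic.pow_mul_pow {G H : R[X]} (hG : G.Monic) (hH : H.Monic)
    (hGH : G.natDegree = H.natDegree) (i j : ℕ) :
    (G ^ i * H ^ j).Monic ∧ (G ^ i * H ^ j).natDegree = (i + j) * G.natDegree := by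
  refine ⟨(hG.pow i).mul (hH.pow j), ?_⟩
  rw [(hG.pow i).natDegree_mul (hH.pow j), hG.natDegree_pow, hH.natDegree_pow, hGH, add_mul]

theorem Monic.natDegree_geom_sum₂_le {G H : R[X]} (hG : G.Monic) (hH : H.Monic)
    (hGH : G.natDegree = H.natDegree) (n : ℕ) :
    (∑ i ∈ range n, G ^ i * H ^ (n - 1 - i)).natDegree ≤ (n - 1) * G.natDegree := by
  refine natDegree_sum_le_of_forall_le _ _ fun i hi => ?_
  rw [(hG.pow_mul_pow hH hGH _ _).2]
  have := mem_range.mp hi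
  gcongr
  omega

theorem Monic.coeff_geom_sum₂ {G H : R[X]} (hG : G.Monic) (hH : H.Monic)
    (hGH : G.natDegree = H.natDegree) (n : ℕ) :
    (∑ i ∈ range n, G ^ i * H ^ (n - 1 - i)).coeff ((n - 1) * G.natDegree) = n := by
  rw [finsetSum_coeff, sum_congr rfl fun i hi => ?_, sum_const, card_range, nsmul_one]
  obtain ⟨hmon, hdeg⟩ := hG.pow_mul_pow hH hGH i (n - 1 - i)
  have : i + (n - 1 - i) = n - 1 := by have := mem_range.mp hi; omega
  rw [← hmon.coeff_natDegree, hdeg, this]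

theorem Monic.add_C_mul_X_pow {G : R[X]} (hG : G.Monic) {k : ℕ} (hk : k < G.natDegree) (δ : R) :
    (G + C δ * X ^ k).Monic ∧ (G + C δ * X ^ k).natDegree = G.natDegree := by
  have hlt : (C δ * X ^ k).degree < G.degree :=
    (degree_C_mul_X_pow_le k δ).trans_lt (coe_lt_degree.mpr hk)
  exact ⟨hG.add_of_left hlt, natDegree_add_eq_left_of_degree_lt hlt⟩

theorem Monic.pow_add_C_mul_X_pow_sub_pow {G : R[X]} (hG : G.Monic) {k : ℕ}
    (hk : k < G.natDegree) (δ : R) (a : ℕ) :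
    ((G + C δ * X ^ k) ^ a - G ^ a).natDegree ≤ (a - 1) * G.natDegree + k ∧
      ((G + C δ * X ^ k) ^ a - G ^ a).coeff ((a - 1) * G.natDegree + k) = a * δ := by
  obtain ⟨hH, hHG⟩ := hG.add_C_mul_X_pow hk δ
  have hS := hH.natDegree_geom_sum₂_le hG hHG a
  have hSa := hH.coeff_geom_sum₂ hG hHG a
  rw [hHG] at hS hSa
  have hD : (G + C δ * X ^ k) ^ a - G ^ a
      = C δ * ((∑ i ∈ range a, (G + C δ * X ^ k) ^ i * G ^ (a - 1 - i)) * X ^ k) := by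
    rw [← geom_sum₂_mul, add_sub_cancel_left]
    ring
  rw [hD, coeff_C_mul, coeff_mul_X_pow, hSa]
  refine ⟨(natDegree_C_mul_le _ _).trans (natDegree_mul_le.trans ?_), mul_comm _ _⟩
  exact add_le_add hS (natDegree_X_pow_le k)

theorem coeff_comp_mul_natDegree {u g : R[X]} (hg : g.Monic) (hg0 : 0 < g.natDegree) {n : ℕ}
    (hu : u.natDegree ≤ n) : (u.comp g).coeff (n * g.natDegree) = u.coeff n := by
  rcases hu.lt_or_eq with hlt | rfl
  · rw [coeff_eq_zero_of_natDegree_lt hlt, coeff_eq_zero_of_natDegree_lt]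
    exact natDegree_comp_le.trans_lt (Nat.mul_lt_mul_of_pos_right hlt hg0)
  · rw [coeff_comp_degree_mul_degree hg0.ne', hg.leadingCoeff, one_pow, mul_one, leadingCoeff]

theorem natDegree_comp_sub_C_mul_pow_le (u g : R[X]) :
    (u.comp g - C u.leadingCoeff * g ^ u.natDegree).natDegree
      ≤ (u.natDegree - 1) * g.natDegree := by
  have h := congrArg (·.comp g) (eraseLead_add_C_mul_X_pow u)
  simp only [add_comp, mul_comp, C_comp, X_pow_comp] at h
  rw [← h, add_sub_cancel_right]
  exact natDegree_comp_le.trans (Nat.mul_le_mul_right _ (eraseLead_natDegree_le u))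

theorem dvd_coeff_scaleRoots (p : R[X]) (s : R) {i : ℕ} (hi : i < p.natDegree) :
    s ∣ (p.scaleRoots s).coeff i := by
  rw [coeff_scaleRoots]
  exact Dvd.dvd.mul_left (dvd_pow_self s (by omega)) _

theorem map_scaleRoots_comp_C_mul_X {S : Type*} [CommRing S] (φ : R →+* S) (p : R[X]) (s : R) :
    ((p.scaleRoots s).map φ).comp (C (φ s) * X) = C (φ s ^ p.natDegree) * p.map φ := by
  ext i
  rw [comp_C_mul_X_coeff, coeff_map, coeff_scaleRoots, coeff_C_mul, coeff_map]
  rcases le_or_gt i p.natDegree with hi | hi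
  · rw [map_mul, map_pow, mul_assoc, ← pow_add, Nat.sub_add_cancel hi, mul_comm]
  · simp [coeff_eq_zero_of_natDegree_lt hi]

end CommRing

theorem exists_eq_add_C_of_natDegree_pow_sub_pow_le {R : Type*} [CommRing R] [IsDomain R]
    {G H : R[X]} {a : ℕ} (ha : (a : R) ≠ 0) (hG : G.Monic) (hH : H.Monic)
    (hGH : G.natDegree = H.natDegree) (h : (G ^ a - H ^ a).natDegree ≤ (a - 1) * G.natDegree) :
    ∃ e : R, H = G + C e := by
  set S := ∑ i ∈ range a, G ^ i * H ^ (a - 1 - i)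
  have hS : S.natDegree = (a - 1) * G.natDegree := by
    refine (hG.natDegree_geom_sum₂_le hH hGH a).antisymm (le_natDegree_of_ne_zero ?_)
    rwa [hG.coeff_geom_sum₂ hH hGH]
  have hS0 : S ≠ 0 := by
    rintro hS0
    apply ha
    rw [← hG.coeff_geom_sum₂ hH hGH a]
    exact congrArg (coeff · _) hS0
  by_cases hd : G - H = 0
  · exact ⟨0, by rw [C_0, add_zero, sub_eq_zero.mp hd]⟩
  rw [← geom_sum₂_mul, natDegree_mul hS0 hd, hS] at h
  refine ⟨-(G - H).coeff 0, ?_⟩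
  rw [map_neg, ← eq_C_of_natDegree_eq_zero (by omega)]
  ring

section Field

variable {K : Type*} [Field K]

theorem exists_monic_comp_of_eq_comp {P u h : K[X]} (hP : P = u.comp h) (hh : h ≠ 0) {c k : K}
    (hc : c ≠ 0) (hk : k ≠ 0) :
    ∃ u' h' : K[X], h'.Monic ∧ u'.natDegree = u.natDegree ∧ h'.natDegree = h.natDegree ∧
      C k * P.comp (C c * X) = u'.comp h' := by
  set h₁ := h.comp (C c * X)
  have hdeg : h₁.natDegree = h.natDegree := by
    rw [natDegree_comp, natDegree_C_mul_X c hc, mul_one]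
  have hl : h₁.leadingCoeff ≠ 0 := by
    rw [leadingCoeff_ne_zero]
    exact (comp_C_mul_X_eq_zero_iff (mem_nonZeroDivisors_of_ne_zero hc)).not.mpr hh
  refine ⟨C k * u.comp (C h₁.leadingCoeff * X), h₁ * C h₁.leadingCoeff⁻¹,
    monic_mul_leadingCoeff_inv (leadingCoeff_ne_zero.mp hl), ?_, ?_, ?_⟩
  · rw [natDegree_C_mul hk, natDegree_comp, natDegree_C_mul_X _ hl, mul_one]
  · rw [natDegree_mul_C (inv_ne_zero hl), hdeg]
  · rw [hP, mul_comp, C_comp, comp_assoc, comp_assoc, mul_comp, C_comp, X_comp, mul_comm h₁,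
      ← mul_assoc, ← C_mul, mul_inv_cancel₀ hl, C_1, one_mul]

theorem eq_C_mul_comp_of_comp_C_mul_X_eq {P Q : K[X]} {c k : K} (hc : c ≠ 0)
    (h : P.comp (C c * X) = C k * Q) : P = C k * Q.comp (C c⁻¹ * X) := by
  have := congrArg (·.comp (C c⁻¹ * X)) h
  simpa [comp_assoc, ← mul_assoc, ← C_mul, mul_inv_cancel₀ hc] using this

end Field

section compRemainder

variable {R : Type*} [CommRing R]

/-- The greedy expansion of `f` in powers of `g`: what is left after clearing the coefficients
of `X ^ (k * deg g)` by multiples of `g ^ k`, for `k = n, …, 0` in turn. -/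
noncomputable def compRemainder (g : R[X]) : ℕ → R[X] → R[X]
  | 0, f => f - C (f.coeff 0)
  | n + 1, f => compRemainder g n (f - C (f.coeff ((n + 1) * g.natDegree)) * g ^ (n + 1))

theorem compRemainder_eq_zero_of_eq_comp {g : R[X]} (hg : g.Monic) (hg0 : 0 < g.natDegree) :
    ∀ {n : ℕ} {f u : R[X]}, u.natDegree ≤ n → f = u.comp g → compRemainder g n f = 0
  | 0, f, u, hu, hf => by
    rw [compRemainder, hf, eq_C_of_natDegree_le_zero hu, C_comp, coeff_C_zero, sub_self]
  | n + 1, f, u, hu, hf => by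
    rw [compRemainder]
    refine compRemainder_eq_zero_of_eq_comp hg hg0 (u := u - C (u.coeff (n + 1)) * X ^ (n + 1))
      ?_ ?_
    · refine natDegree_le_iff_coeff_eq_zero.mpr fun i hi => ?_
      rw [coeff_sub, coeff_C_mul_X_pow]
      split_ifs with h
      · rw [h, sub_self]
      · rw [coeff_eq_zero_of_natDegree_lt (by omega), sub_zero]
    · rw [hf, coeff_comp_mul_natDegree hg hg0 hu, sub_comp, mul_comp, C_comp, X_pow_comp]

theorem exists_eq_comp_of_compRemainder_eq_zero (g : R[X]) :
    ∀ {n : ℕ} {f : R[X]}, compRemainder g n f = 0 → ∃ u : R[X], f = u.comp g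
  | 0, f, h => ⟨C (f.coeff 0), by rw [C_comp, ← sub_eq_zero]; exact h⟩
  | n + 1, f, h => by
    obtain ⟨u, hu⟩ := exists_eq_comp_of_compRemainder_eq_zero g
      (f := f - C (f.coeff ((n + 1) * g.natDegree)) * g ^ (n + 1)) h
    refine ⟨u + C (f.coeff ((n + 1) * g.natDegree)) * X ^ (n + 1), ?_⟩
    rw [add_comp, ← hu, mul_comp, C_comp, X_pow_comp, sub_add_cancel]

theorem map_compRemainder {S : Type*} [CommRing S] (φ : R →+* S) {g : R[X]}
    (hg : (g.map φ).natDegree = g.natDegree) :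
    ∀ (n : ℕ) (f : R[X]), (compRemainder g n f).map φ = compRemainder (g.map φ) n (f.map φ)
  | 0, f => by simp [compRemainder]
  | n + 1, f => by simp [compRemainder, map_compRemainder φ hg n, hg]

theorem coeff_compRemainder_zero (g : R[X]) :
    ∀ (n : ℕ) (f : R[X]), (compRemainder g n f).coeff 0 = 0
  | 0, f => by rw [compRemainder, coeff_sub, coeff_C_zero, sub_self]
  | n + 1, _ => coeff_compRemainder_zero g n _

theorem natDegree_compRemainder_le (g : R[X]) {N : ℕ} :
    ∀ {n : ℕ} {f : R[X]}, f.natDegree ≤ N → n * g.natDegree ≤ N →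
      (compRemainder g n f).natDegree ≤ N
  | 0, f, hf, _ => (natDegree_sub_le _ _).trans (max_le hf (by simp))
  | n + 1, f, hf, hn => by
    refine natDegree_compRemainder_le g (n := n) ?_ (le_trans (by gcongr; omega) hn)
    refine (natDegree_sub_le _ _).trans (max_le hf ?_)
    exact (natDegree_C_mul_le _ _).trans (natDegree_pow_le.trans hn)

end compRemainder

section IsApproxRoot

variable {R : Type*} [CommRing R]

/-- `G` is an `a`-th root of `F / lc F` up to an error of degree `< a * deg G - j`. -/
def IsApproxRoot (F : R[X]) (a j : ℕ) (G : R[X]) : Prop :=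
  G.Monic ∧ ∀ i, a * G.natDegree - j ≤ i → (C F.leadingCoeff * G ^ a - F).coeff i = 0

theorem IsApproxRoot.add_C_mul_X_pow {F G : R[X]} {a j : ℕ} (hG : IsApproxRoot F a j G)
    (ha : 0 < a) (hj : j < G.natDegree) {δ : R}
    (hδ : (C F.leadingCoeff * G ^ a - F).coeff (a * G.natDegree - (j + 1))
      + F.leadingCoeff * (a * δ) = 0) :
    IsApproxRoot F a (j + 1) (G + C δ * X ^ (G.natDegree - (j + 1))) := by
  set k := G.natDegree - (j + 1)
  have hn : a * G.natDegree - (j + 1) = (a - 1) * G.natDegree + k := by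
    have : a * G.natDegree = (a - 1) * G.natDegree + G.natDegree := by
      rw [← Nat.succ_mul, Nat.succ_eq_add_one, Nat.sub_add_cancel ha]
    omega
  obtain ⟨hmon, hdeg⟩ := hG.1.add_C_mul_X_pow (k := k) (by omega) δ
  obtain ⟨hDdeg, hDcoeff⟩ := hG.1.pow_add_C_mul_X_pow_sub_pow (k := k) (by omega) δ a
  refine ⟨hmon, fun i hi => ?_⟩
  rw [hdeg] at hi
  rw [show C F.leadingCoeff * (G + C δ * X ^ k) ^ a - F
      = (C F.leadingCoeff * G ^ a - F) + C F.leadingCoeff * ((G + C δ * X ^ k) ^ a - G ^ a) by ring,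
    coeff_add, coeff_C_mul]
  rcases hi.eq_or_lt with rfl | hlt
  · rwa [hn, hDcoeff, ← hn]
  · rw [hG.2 i (by omega), coeff_eq_zero_of_natDegree_lt (by omega), mul_zero, add_zero]

theorem IsApproxRoot.map {S : Type*} [CommRing S] [Nontrivial S] (φ : R →+* S)
    {F G : R[X]} {a j : ℕ} (hG : IsApproxRoot F a j G) (hF : φ F.leadingCoeff ≠ 0) :
    IsApproxRoot (F.map φ) a j (G.map φ) := by
  refine ⟨hG.1.map φ, fun i hi => ?_⟩
  rw [hG.1.natDegree_map] at hi
  rw [leadingCoeff_map_of_leadingCoeff_ne_zero φ hF, ← map_C, ← Polynomial.map_pow,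
    ← Polynomial.map_mul, ← Polynomial.map_sub, coeff_map, hG.2 i hi, map_zero]

/-- Over a field in which `a ≠ 0`, an approximate `a`-th root of precision `deg G` already
determines the right component of any decomposition with left component of degree `a`. -/
theorem IsApproxRoot.compRemainder_eq_zero {K : Type*} [Field K] {P u h G : K[X]} {a : ℕ}
    (hG : IsApproxRoot P a G.natDegree G) (ha : (a : K) ≠ 0) (hP : P = u.comp h)
    (hu : u.natDegree = a) (hh : h.Monic) (hhG : h.natDegree = G.natDegree)
    (hb : 0 < G.natDegree) : compRemainder G a P = 0 := by
  set b := G.natDegree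
  have ha0 : a ≠ 0 := by rintro rfl; exact ha Nat.cast_zero
  have hL : P.leadingCoeff = u.leadingCoeff := by
    rw [hP, leadingCoeff_comp (by omega), hh.leadingCoeff, one_pow, mul_one]
  have hL0 : u.leadingCoeff ≠ 0 := leadingCoeff_ne_zero.mpr (by rintro rfl; simp at hu; omega)
  have hcomp : (P - C u.leadingCoeff * h ^ a).natDegree ≤ (a - 1) * b := by
    simpa only [hP, hu, hhG] using natDegree_comp_sub_C_mul_pow_le u h
  have happrox : (C u.leadingCoeff * G ^ a - P).natDegree ≤ (a - 1) * b := by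
    refine natDegree_le_iff_coeff_eq_zero.mpr fun i hi => ?_
    rw [← hL]
    exact hG.2 i (by rw [Nat.sub_one_mul] at hi; exact hi.le)
  have hpow : (G ^ a - h ^ a).natDegree ≤ (a - 1) * b := by
    rw [← natDegree_C_mul hL0, mul_sub,
      show C u.leadingCoeff * G ^ a - C u.leadingCoeff * h ^ a
        = (C u.leadingCoeff * G ^ a - P) + (P - C u.leadingCoeff * h ^ a) by ring]
    exact (natDegree_add_le _ _).trans (max_le happrox hcomp)
  obtain ⟨e, he⟩ := exists_eq_add_C_of_natDegree_pow_sub_pow_le ha hG.1 hh hhG.symm hpow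
  refine compRemainder_eq_zero_of_eq_comp hG.1 hb (u := u.comp (X + C e)) ?_ ?_
  · rw [natDegree_comp, natDegree_X_add_C, mul_one, hu]
  · rw [hP, he, comp_assoc, add_comp, X_comp, C_comp]

end IsApproxRoot

/-- Unlike a weighted sup-norm, this weighted `ℓ¹`-norm is submultiplicative. -/
def weightedNorm (M : ℕ) (p : ℤ[X]) : ℕ :=
  p.sum fun i c => c.natAbs * M ^ i

section weightedNorm

variable {M B : ℕ}

theorem weightedNorm_eq_sum {p : ℤ[X]} {s : Finset ℕ} (hs : p.support ⊆ s) :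
    weightedNorm M p = ∑ i ∈ s, (p.coeff i).natAbs * M ^ i :=
  sum_eq_of_subset _ (by simp) hs

theorem natAbs_coeff_mul_pow_le_weightedNorm (p : ℤ[X]) (i : ℕ) :
    (p.coeff i).natAbs * M ^ i ≤ weightedNorm M p := by
  by_cases hi : i ∈ p.support
  · exact single_le_sum (f := fun i => (p.coeff i).natAbs * M ^ i) (by simp) hi
  · simp [notMem_support_iff.mp hi]

theorem weightedNorm_add_le (p q : ℤ[X]) :
    weightedNorm M (p + q) ≤ weightedNorm M p + weightedNorm M q := by
  rw [weightedNorm_eq_sum support_add, weightedNorm_eq_sum subset_union_left,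
    weightedNorm_eq_sum subset_union_right, ← sum_add_distrib]
  refine sum_le_sum fun i _ => ?_
  rw [coeff_add, ← add_mul]
  exact Nat.mul_le_mul_right _ (Int.natAbs_add_le _ _)

theorem weightedNorm_neg (p : ℤ[X]) : weightedNorm M (-p) = weightedNorm M p := by
  simp [weightedNorm, sum_def]

theorem weightedNorm_sub_le (p q : ℤ[X]) :
    weightedNorm M (p - q) ≤ weightedNorm M p + weightedNorm M q := by
  simpa [sub_eq_add_neg, weightedNorm_neg] using weightedNorm_add_le (M := M) p (-q)

theorem weightedNorm_sum_le {ι : Type*} (s : Finset ι) (p : ι → ℤ[X]) :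
    weightedNorm M (∑ i ∈ s, p i) ≤ ∑ i ∈ s, weightedNorm M (p i) := by
  classical
  induction s using Finset.induction_on with
  | empty => simp [weightedNorm]
  | insert i s hi ih =>
    rw [sum_insert hi, sum_insert hi]
    exact (weightedNorm_add_le _ _).trans (by gcongr)

theorem weightedNorm_C_mul_X_pow_mul (c : ℤ) (n : ℕ) (p : ℤ[X]) :
    weightedNorm M (C c * X ^ n * p) = c.natAbs * M ^ n * weightedNorm M p := by
  have hs : (C c * X ^ n * p).support ⊆ p.support.map (addRightEmbedding n) := by
    intro i hi
    rw [mem_support_iff, mul_assoc, coeff_C_mul, coeff_X_pow_mul'] at hi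
    split_ifs at hi with h
    · exact mem_map.mpr ⟨i - n, mem_support_iff.mpr (right_ne_zero_of_mul hi), by simp; omega⟩
    · simp at hi
  rw [weightedNorm_eq_sum hs, sum_map, weightedNorm, sum_def, mul_sum]
  refine sum_congr rfl fun i _ => ?_
  simp only [addRightEmbedding_apply, mul_assoc, coeff_C_mul, coeff_X_pow_mul, Int.natAbs_mul,
    pow_add]
  ring

theorem weightedNorm_mul_le (p q : ℤ[X]) :
    weightedNorm M (p * q) ≤ weightedNorm M p * weightedNorm M q := by
  conv_lhs => rw [p.as_sum_support_C_mul_X_pow, sum_mul]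
  refine (weightedNorm_sum_le _ _).trans_eq ?_
  simp only [weightedNorm_C_mul_X_pow_mul, ← sum_mul]
  rfl

theorem weightedNorm_one : weightedNorm M 1 = 1 := by
  rw [weightedNorm, ← C_1, sum_C_index] <;> simp

theorem weightedNorm_C_mul_X_pow (c : ℤ) (n : ℕ) :
    weightedNorm M (C c * X ^ n) = c.natAbs * M ^ n := by
  simpa [weightedNorm_one] using weightedNorm_C_mul_X_pow_mul (M := M) c n 1

theorem weightedNorm_pow_le (p : ℤ[X]) (n : ℕ) :
    weightedNorm M (p ^ n) ≤ weightedNorm M p ^ n := by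
  induction n with
  | zero => simp [weightedNorm_one]
  | succ n ih =>
    rw [pow_succ, pow_succ]
    exact (weightedNorm_mul_le _ _).trans (Nat.mul_le_mul_right _ ih)

theorem weightedNorm_le_of_forall {p : ℤ[X]}
    (h : ∀ i ≤ p.natDegree, (p.coeff i).natAbs * M ^ i ≤ B) :
    weightedNorm M p ≤ (p.natDegree + 1) * B := by
  rw [weightedNorm_eq_sum supp_subset_range_natDegree_succ]
  refine (sum_le_card_nsmul _ _ _ fun i hi => h i (Nat.lt_succ_iff.mp (mem_range.mp hi))).trans ?_
  simp


theorem weightedNorm_sub_C_mul_pow_le {f g : ℤ[X]} (hg : weightedNorm M g ≤ B * M ^ g.natDegree)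
    (k : ℕ) :
    weightedNorm M (f - C (f.coeff (k * g.natDegree)) * g ^ k)
      ≤ (1 + B ^ k) * weightedNorm M f := by
  set c := f.coeff (k * g.natDegree)
  have hdigit : weightedNorm M (C c * g ^ k) ≤ B ^ k * weightedNorm M f :=
    calc weightedNorm M (C c * g ^ k) = c.natAbs * weightedNorm M (g ^ k) := by
          simpa using weightedNorm_C_mul_X_pow_mul (M := M) c 0 (g ^ k)
      _ ≤ c.natAbs * (B * M ^ g.natDegree) ^ k :=
          Nat.mul_le_mul_left _ ((weightedNorm_pow_le g k).trans (Nat.pow_le_pow_left hg k))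
      _ = B ^ k * (c.natAbs * M ^ (k * g.natDegree)) := by ring
      _ ≤ B ^ k * weightedNorm M f :=
          Nat.mul_le_mul_left _ (natAbs_coeff_mul_pow_le_weightedNorm f _)
  calc _ ≤ weightedNorm M f + weightedNorm M (C c * g ^ k) := weightedNorm_sub_le _ _
    _ ≤ (1 + B ^ k) * weightedNorm M f := by rw [add_mul, one_mul]; gcongr

theorem weightedNorm_compRemainder_le {g : ℤ[X]} (hB : 1 ≤ B)
    (hg : weightedNorm M g ≤ B * M ^ g.natDegree) :
    ∀ (n : ℕ) (f : ℤ[X]),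
      weightedNorm M (compRemainder g n f) ≤ (1 + B ^ n) ^ (n + 1) * weightedNorm M f
  | 0, f => by simpa [compRemainder] using weightedNorm_sub_C_mul_pow_le (f := f) hg 0
  | n + 1, f =>
    calc _ ≤ (1 + B ^ n) ^ (n + 1) * weightedNorm M
            (f - C (f.coeff ((n + 1) * g.natDegree)) * g ^ (n + 1)) :=
          weightedNorm_compRemainder_le hB hg n _
      _ ≤ (1 + B ^ (n + 1)) ^ (n + 1) * ((1 + B ^ (n + 1)) * weightedNorm M f) := by
          gcongr
          · omega
          · exact weightedNorm_sub_C_mul_pow_le hg _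
      _ = (1 + B ^ (n + 1)) ^ (n + 1 + 1) * weightedNorm M f := by ring

theorem natAbs_coeff_pow_mul_pow_le {G : ℤ[X]} {a b : ℕ} (hM : 0 < M) (ha : 0 < a)
    (hG : weightedNorm M G ≤ B * M ^ b) (k : ℕ) :
    ((G ^ a).coeff ((a - 1) * b + k)).natAbs * M ^ k ≤ B ^ a * M ^ b := by
  have hab : b * a = (a - 1) * b + b := by
    rw [mul_comm, ← Nat.succ_mul, Nat.succ_eq_add_one, Nat.sub_add_cancel ha]
  refine Nat.le_of_mul_le_mul_left ?_ (pow_pos hM ((a - 1) * b))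
  calc M ^ ((a - 1) * b) * (((G ^ a).coeff ((a - 1) * b + k)).natAbs * M ^ k)
      = ((G ^ a).coeff ((a - 1) * b + k)).natAbs * M ^ ((a - 1) * b + k) := by ring
    _ ≤ weightedNorm M G ^ a :=
        (natAbs_coeff_mul_pow_le_weightedNorm _ _).trans (weightedNorm_pow_le _ _)
    _ ≤ (B * M ^ b) ^ a := Nat.pow_le_pow_left hG a
    _ = M ^ ((a - 1) * b) * (B ^ a * M ^ b) := by rw [mul_pow, ← pow_mul, hab, pow_add]; ring

theorem weightedNorm_add_C_mul_X_pow_le {G : ℤ[X]} {a b k w : ℕ} (hM : 0 < M) (ha : 0 < a)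
    (hG : weightedNorm M G ≤ B * M ^ b) (hwk : w + k = b) {δ : ℤ}
    (hδ : δ.natAbs ≤ ((G ^ a).coeff ((a - 1) * b + k)).natAbs + M ^ w) :
    weightedNorm M (G + C δ * X ^ k) ≤ (B + B ^ a + 1) * M ^ b :=
  calc weightedNorm M (G + C δ * X ^ k) ≤ weightedNorm M G + δ.natAbs * M ^ k :=
        (weightedNorm_add_le _ _).trans_eq (by rw [weightedNorm_C_mul_X_pow])
    _ ≤ B * M ^ b + (((G ^ a).coeff ((a - 1) * b + k)).natAbs + M ^ w) * M ^ k := by gcongr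
    _ = B * M ^ b + (((G ^ a).coeff ((a - 1) * b + k)).natAbs * M ^ k + M ^ b) := by
        rw [add_mul, ← pow_add, hwk]
    _ ≤ B * M ^ b + (B ^ a * M ^ b + M ^ b) :=
        Nat.add_le_add_left (Nat.add_le_add_right (natAbs_coeff_pow_mul_pow_le hM ha hG k) _) _
    _ = (B + B ^ a + 1) * M ^ b := by ring

end weightedNorm

end Polynomial

theorem natAbs_coeff_le_intMaxNorm (f : ℤ[X]) (i : ℕ) : (f.coeff i).natAbs ≤ intMaxNorm f := by
  by_cases hi : i ∈ f.support
  · exact Finset.le_sup (f := fun i => (f.coeff i).natAbs) hi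
  · simp [notMem_support_iff.mp hi]

theorem natAbs_coeff_scaleRoots_le (f : ℤ[X]) (c : ℕ) {i : ℕ} (hi : i ≤ f.natDegree) :
    ((f.scaleRoots (c * f.leadingCoeff)).coeff i).natAbs
      ≤ f.leadingCoeff.natAbs * (c * intMaxNorm f) ^ (f.natDegree - i) := by
  rw [coeff_scaleRoots, Int.natAbs_mul, Int.natAbs_pow, Int.natAbs_mul, Int.natAbs_natCast]
  obtain ⟨k, hk⟩ := Nat.exists_eq_add_of_le hi
  rcases k with _ | k
  · rw [add_zero] at hk
    rw [← hk, Nat.sub_self, pow_zero, pow_zero, leadingCoeff, hk]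
  · have hL : f.leadingCoeff.natAbs ≤ intMaxNorm f := natAbs_coeff_le_intMaxNorm f _
    rw [show f.natDegree - i = k + 1 by omega]
    calc (f.coeff i).natAbs * (c * f.leadingCoeff.natAbs) ^ (k + 1)
        = c ^ (k + 1) * ((f.coeff i).natAbs * f.leadingCoeff.natAbs ^ k
            * f.leadingCoeff.natAbs) := by ring
      _ ≤ c ^ (k + 1) * (intMaxNorm f * intMaxNorm f ^ k * f.leadingCoeff.natAbs) := by
          gcongr
          exact natAbs_coeff_le_intMaxNorm f i
      _ = f.leadingCoeff.natAbs * (c * intMaxNorm f) ^ (k + 1) := by ring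

theorem weightedNorm_scaleRoots_le (f : ℤ[X]) (c : ℕ) :
    weightedNorm (c * intMaxNorm f) (f.scaleRoots (c * f.leadingCoeff))
      ≤ (f.natDegree + 1) * (intMaxNorm f * (c * intMaxNorm f) ^ f.natDegree) := by
  have hL : f.leadingCoeff.natAbs ≤ intMaxNorm f := natAbs_coeff_le_intMaxNorm f _
  rw [← natDegree_scaleRoots f (c * f.leadingCoeff)]
  refine weightedNorm_le_of_forall fun i hi => ?_
  rw [natDegree_scaleRoots] at hi ⊢
  calc _ ≤ f.leadingCoeff.natAbs * (c * intMaxNorm f) ^ (f.natDegree - i)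
          * (c * intMaxNorm f) ^ i := Nat.mul_le_mul_right _ (natAbs_coeff_scaleRoots_le f c hi)
    _ = f.leadingCoeff.natAbs * (c * intMaxNorm f) ^ f.natDegree := by
        rw [mul_assoc, ← pow_add, Nat.sub_add_cancel hi]
    _ ≤ _ := Nat.mul_le_mul_right _ hL

theorem dvd_coeff_C_leadingCoeff_mul_pow_sub {a b : ℕ} {F G : ℤ[X]} (hGa : (a : ℤ[X]) ∣ G - X ^ b)
    (hdvd : ∀ i < a * b, (a : ℤ) ^ 2 * F.leadingCoeff ∣ F.coeff i) {n : ℕ} (hn : n < a * b) :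
    (a : ℤ) ^ 2 * F.leadingCoeff ∣ (C F.leadingCoeff * G ^ a - F).coeff n := by
  have hpow : (a : ℤ) ^ 2 ∣ (G ^ a).coeff n := by
    have h := dvd_sub_pow_of_dvd_sub hGa 1
    rw [pow_one, ← pow_mul, ← C_eq_natCast, ← C_pow, C_dvd_iff_dvd_coeff] at h
    simpa [coeff_X_pow, show n ≠ b * a by rw [mul_comm]; omega] using h n
  rw [coeff_sub, coeff_C_mul, mul_comm _ F.leadingCoeff]
  exact dvd_sub (mul_dvd_mul_left _ hpow) (mul_comm F.leadingCoeff _ ▸ hdvd n hn)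

theorem mul_natAbs_le_of_sub_eq {a B : ℕ} {L t x y : ℤ} (hL : L ≠ 0)
    (ht : L * x - y = a ^ 2 * L * t) (hy : y.natAbs ≤ L.natAbs * B) :
    a * t.natAbs ≤ x.natAbs + B := by
  have h : L.natAbs * (a ^ 2 * t.natAbs) ≤ L.natAbs * (x.natAbs + B) :=
    calc L.natAbs * (a ^ 2 * t.natAbs) = (L * x - y).natAbs := by
          rw [ht, Int.natAbs_mul, Int.natAbs_mul, Int.natAbs_pow, Int.natAbs_natCast]; ring
      _ ≤ L.natAbs * x.natAbs + y.natAbs := by rw [← Int.natAbs_mul]; exact Int.natAbs_sub_le _ _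
      _ ≤ L.natAbs * (x.natAbs + B) := by rw [mul_add]; gcongr
  calc a * t.natAbs ≤ a ^ 2 * t.natAbs := by gcongr; exact Nat.le_self_pow two_ne_zero a
    _ ≤ x.natAbs + B := Nat.le_of_mul_le_mul_left h (Int.natAbs_pos.mpr hL)

def approxRootBound (a : ℕ) : ℕ → ℕ
  | 0 => 1
  | j + 1 => approxRootBound a j + approxRootBound a j ^ a + 1

theorem one_le_approxRootBound (a j : ℕ) : 1 ≤ approxRootBound a j := by
  cases j <;> simp [approxRootBound]

section ApproxRoot

variable {a b M : ℕ} {F : ℤ[X]} (ha : 0 < a) (hM : 0 < M) (hF : F.natDegree = a * b)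
  (hdvd : ∀ i < a * b, (a : ℤ) ^ 2 * F.leadingCoeff ∣ F.coeff i)
  (hsize : ∀ i ≤ a * b, (F.coeff i).natAbs ≤ F.leadingCoeff.natAbs * M ^ (a * b - i))
include ha hM hF hdvd hsize

theorem exists_approxRoot_succ {j : ℕ} (hj : j < b) {G : ℤ[X]} (hGb : G.natDegree = b)
    (hG : IsApproxRoot F a j G) (hGa : (a : ℤ[X]) ∣ G - X ^ b)
    (hGM : weightedNorm M G ≤ approxRootBound a j * M ^ b) :
    ∃ G' : ℤ[X], G'.natDegree = b ∧ IsApproxRoot F a (j + 1) G' ∧ (a : ℤ[X]) ∣ G' - X ^ b ∧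
      weightedNorm M G' ≤ approxRootBound a (j + 1) * M ^ b := by
  subst hGb
  set L := F.leadingCoeff
  set k := G.natDegree - (j + 1)
  have hab : a * G.natDegree = (a - 1) * G.natDegree + G.natDegree := by
    rw [← Nat.succ_mul, Nat.succ_eq_add_one, Nat.sub_add_cancel ha]
  have hn : a * G.natDegree - (j + 1) = (a - 1) * G.natDegree + k := by omega
  -- Adding `δ X^k` to `G` changes the coefficient `c` of `X^(ab-j-1)` in `L G^a - F` by `a L δ`
  -- (`IsApproxRoot.add_C_mul_X_pow`); as `a² L ∣ c`, the choice `δ = -c / (a L)` is a multiple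
  -- of `a`.
  obtain ⟨t, ht⟩ := dvd_coeff_C_leadingCoeff_mul_pow_sub hGa hdvd (n := (a - 1) * G.natDegree + k)
    (by omega)
  set δ := -(a * t)
  have hδ : δ.natAbs ≤ ((G ^ a).coeff ((a - 1) * G.natDegree + k)).natAbs + M ^ (j + 1) := by
    have hF0 : 0 < F.natDegree := by rw [hF]; exact Nat.mul_pos ha (by omega)
    have hL : L ≠ 0 := leadingCoeff_ne_zero.mpr (ne_zero_of_natDegree_gt hF0)
    have hy := hsize ((a - 1) * G.natDegree + k) (by omega)
    rw [show a * G.natDegree - ((a - 1) * G.natDegree + k) = j + 1 by omega] at hy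
    rw [coeff_sub, coeff_C_mul] at ht
    simpa [δ, Int.natAbs_mul] using mul_natAbs_le_of_sub_eq hL ht hy
  refine ⟨G + C δ * X ^ k, (hG.1.add_C_mul_X_pow (by omega) δ).2, ?_, ?_, ?_⟩
  · refine hG.add_C_mul_X_pow ha hj ?_
    rw [hn, ht, show δ = -(a * t) from rfl]
    ring
  · rw [show G + C δ * X ^ k - X ^ G.natDegree
        = (G - X ^ G.natDegree) + (a : ℤ[X]) * (C (-t) * X ^ k) by
      simp only [δ, map_neg, map_mul, map_natCast]; ring]
    exact dvd_add hGa (dvd_mul_right _ _)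
  · exact weightedNorm_add_C_mul_X_pow_le hM ha hGM (by omega) hδ

theorem exists_approxRoot :
    ∀ j ≤ b, ∃ G : ℤ[X], G.natDegree = b ∧ IsApproxRoot F a j G ∧ (a : ℤ[X]) ∣ G - X ^ b ∧
      weightedNorm M G ≤ approxRootBound a j * M ^ b
  | 0, _ => by
    refine ⟨X ^ b, natDegree_X_pow b, ⟨monic_X_pow b, fun i hi => ?_⟩, by simp, ?_⟩
    · rw [natDegree_X_pow, Nat.sub_zero] at hi
      rw [coeff_sub, coeff_C_mul, ← pow_mul, coeff_X_pow]
      rcases hi.eq_or_lt with rfl | hlt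
      · rw [if_pos (mul_comm _ _), mul_one, leadingCoeff, hF, sub_self]
      · rw [if_neg (by rw [mul_comm]; omega), mul_zero, coeff_eq_zero_of_natDegree_lt (hF ▸ hlt),
          sub_zero]
    · simpa [approxRootBound] using (weightedNorm_C_mul_X_pow (M := M) 1 b).le
  | j + 1, hj => by
    obtain ⟨G, hGb, hG, hGa, hGM⟩ := exists_approxRoot j (by omega)
    exact exists_approxRoot_succ ha hM hF hdvd hsize (by omega) hGb hG hGa hGM

end ApproxRoot

theorem exists_approxRoot_scaleRoots {a b : ℕ} (ha : 0 < a) {f : ℤ[X]}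
    (hf : f.natDegree = a * b) (hL : f.leadingCoeff ≠ 0) :
    ∃ G : ℤ[X], G.natDegree = b ∧
      IsApproxRoot (f.scaleRoots ((a ^ 2 : ℕ) * f.leadingCoeff)) a b G ∧
      weightedNorm (a ^ 2 * intMaxNorm f) G ≤ approxRootBound a b * (a ^ 2 * intMaxNorm f) ^ b := by
  have hμ : 0 < intMaxNorm f :=
    (Int.natAbs_pos.mpr hL).trans_le (natAbs_coeff_le_intMaxNorm f _)
  obtain ⟨G, hGb, hG, -, hGM⟩ :=
    exists_approxRoot (F := f.scaleRoots ((a ^ 2 : ℕ) * f.leadingCoeff))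
    ha (Nat.mul_pos (pow_pos ha 2) hμ) (by rw [natDegree_scaleRoots, hf])
    (fun i hi => by
      rw [leadingCoeff_scaleRoots]; exact_mod_cast dvd_coeff_scaleRoots f _ (hf ▸ hi))
    (fun i hi => by
      simpa only [leadingCoeff_scaleRoots, hf] using natAbs_coeff_scaleRoots_le f (a ^ 2) (hf ▸ hi))
    b le_rfl
  exact ⟨G, hGb, hG, hGM⟩

theorem compRemainder_scaleRoots_ne_zero {f G : ℤ[X]} {a : ℕ} {s : ℤ} (hs : s ≠ 0)
    (hG : G.Monic) (ha : 2 ≤ a) (hb : 2 ≤ G.natDegree) (hf : f.natDegree = a * G.natDegree)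
    (hind : IndecomposablePoly (f.map (Int.castRingHom ℚ))) :
    compRemainder G a (f.scaleRoots s) ≠ 0 := by
  intro h
  obtain ⟨u, hu⟩ := exists_eq_comp_of_compRemainder_eq_zero G h
  set φ := Int.castRingHom ℚ
  have hs' : φ s ≠ 0 := by simpa [φ] using hs
  have hFQ : (f.scaleRoots s).map φ = (u.map φ).comp (G.map φ) := by rw [hu, map_comp]
  have hGQ : (G.map φ).natDegree = G.natDegree := hG.natDegree_map φ
  have huQ : (u.map φ).natDegree = a := by
    have := congrArg natDegree hFQ
    rw [natDegree_comp, hGQ, natDegree_map_eq_of_injective (RingHom.injective_int φ),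
      natDegree_scaleRoots, hf] at this
    exact (Nat.eq_of_mul_eq_mul_right (by omega) this).symm
  have hfQ : f.map φ = C (φ s ^ f.natDegree)⁻¹ * ((f.scaleRoots s).map φ).comp (C (φ s) * X) := by
    rw [map_scaleRoots_comp_C_mul_X, ← mul_assoc, ← C_mul, inv_mul_cancel₀ (pow_ne_zero _ hs'),
      C_1, one_mul]
  obtain ⟨u', g', -, hu', hg', hcomp⟩ := exists_monic_comp_of_eq_comp hFQ
    (hG.map φ).ne_zero hs' (inv_ne_zero (pow_ne_zero _ hs'))
  exact hind.2 ⟨u', g', by omega, by omega, hfQ.trans hcomp⟩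

theorem map_compRemainder_scaleRoots_eq_zero {K : Type*} [Field K] {f G : ℤ[X]} {a : ℕ} {s : ℤ}
    (hG : IsApproxRoot (f.scaleRoots s) a G.natDegree G) (hb : 0 < G.natDegree)
    (haK : (a : K) ≠ 0) (hsK : (s : K) ≠ 0) (hfK : (f.leadingCoeff : K) ≠ 0) {u g : K[X]}
    (hu : u.natDegree = a) (hg : g.natDegree = G.natDegree)
    (hcomp : f.map (Int.castRingHom K) = u.comp g) :
    (compRemainder G a (f.scaleRoots s)).map (Int.castRingHom K) = 0 := by
  set φ := Int.castRingHom K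
  have hFK : (f.scaleRoots s).map φ = C (φ s ^ f.natDegree) * (f.map φ).comp (C (φ s)⁻¹ * X) :=
    eq_C_mul_comp_of_comp_C_mul_X_eq hsK (map_scaleRoots_comp_C_mul_X φ f s)
  obtain ⟨u', g', hg'mon, hu', hg', hcomp'⟩ := exists_monic_comp_of_eq_comp hcomp
    (by rintro rfl; simp at hg; omega) (inv_ne_zero hsK) (pow_ne_zero _ hsK)
  have hGK := hG.map φ (by rwa [leadingCoeff_scaleRoots])
  rw [← hG.1.natDegree_map φ] at hGK hb hg
  rw [map_compRemainder φ (hG.1.natDegree_map φ)]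
  exact hGK.compRemainder_eq_zero haK (hFK.trans hcomp') (hu'.trans hu) hg'mon (hg'.trans hg) hb
def obstructionBound (a b : ℕ) : ℕ :=
  (1 + approxRootBound a b ^ a) ^ (a + 1) * (a * b + 1) * a ^ (2 * (a * b - 1))

/-- The leading coefficient of the remainder sits in degree `m ≥ 1`, which saves one factor
`M = a² μ` and brings the bound down to `μ ^ (a * b)`. -/
theorem le_obstructionBound_mul_pow {a b μ N m : ℕ} (ha : 0 < a) (hμ : 0 < μ) (hab : 0 < a * b)
    (hm : 1 ≤ m) (h : N * (a ^ 2 * μ) ^ m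
      ≤ (1 + approxRootBound a b ^ a) ^ (a + 1) * ((a * b + 1) * (μ * (a ^ 2 * μ) ^ (a * b)))) :
    N ≤ obstructionBound a b * μ ^ (a * b) := by
  have hM : 0 < a ^ 2 * μ := Nat.mul_pos (pow_pos ha 2) hμ
  have hM1 : (a ^ 2 * μ) ^ (a * b - 1) * (a ^ 2 * μ) = (a ^ 2 * μ) ^ (a * b) := by
    rw [← pow_succ, Nat.sub_add_cancel hab]
  have hμ1 : μ * μ ^ (a * b - 1) = μ ^ (a * b) := by rw [← pow_succ', Nat.sub_add_cancel hab]
  refine Nat.le_of_mul_le_mul_right (h.trans ?_) (pow_pos hM m)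
  calc _ = (1 + approxRootBound a b ^ a) ^ (a + 1) * (a * b + 1)
          * (μ * (a ^ 2 * μ) ^ (a * b - 1)) * (a ^ 2 * μ) ^ 1 := by rw [pow_one, ← hM1]; ring
    _ ≤ (1 + approxRootBound a b ^ a) ^ (a + 1) * (a * b + 1)
          * (μ * (a ^ 2 * μ) ^ (a * b - 1)) * (a ^ 2 * μ) ^ m :=
        Nat.mul_le_mul_left _ (Nat.pow_le_pow_right hM hm)
    _ = obstructionBound a b * μ ^ (a * b) * (a ^ 2 * μ) ^ m := by
        rw [obstructionBound, ← hμ1, mul_pow, ← pow_mul]; ring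

theorem exists_obstruction {a b : ℕ} (ha : 2 ≤ a) (hb : 2 ≤ b) {f : ℤ[X]}
    (hf : f.natDegree = a * b) (hind : IndecomposablePoly (f.map (Int.castRingHom ℚ))) :
    ∃ N : ℤ, N ≠ 0 ∧ N.natAbs ≤ obstructionBound a b * intMaxNorm f ^ (a * b) ∧
      ∀ (K : Type*) [Field K], (a : K) ≠ 0 → (f.leadingCoeff : K) ≠ 0 →
        ∀ u g : K[X], u.natDegree = a → g.natDegree = b →
          f.map (Int.castRingHom K) = u.comp g → (N : K) = 0 := by
  have hab : 0 < a * b := Nat.mul_pos (by omega) (by omega)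
  have hL : f.leadingCoeff ≠ 0 :=
    leadingCoeff_ne_zero.mpr (ne_zero_of_natDegree_gt (n := 0) (hf ▸ hab))
  have hμ : 0 < intMaxNorm f := (Int.natAbs_pos.mpr hL).trans_le (natAbs_coeff_le_intMaxNorm f _)
  set s : ℤ := ((a ^ 2 : ℕ) : ℤ) * f.leadingCoeff
  obtain ⟨G, hGb, hG, hGM⟩ := exists_approxRoot_scaleRoots (by omega) hf hL
  subst hGb
  set R := compRemainder G a (f.scaleRoots s)
  have hR : R ≠ 0 :=
    compRemainder_scaleRoots_ne_zero (mul_ne_zero (by positivity) hL) hG.1 ha hb hf hind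
  have hm : 1 ≤ R.natDegree := by
    by_contra h0
    exact hR (by rw [eq_C_of_natDegree_eq_zero (p := R) (by omega), coeff_compRemainder_zero, C_0])
  refine ⟨R.leadingCoeff, leadingCoeff_ne_zero.mpr hR, ?_, fun K _ haK hLK u g hu hg hcomp => ?_⟩
  · refine le_obstructionBound_mul_pow (by omega) hμ hab hm ?_
    refine (natAbs_coeff_mul_pow_le_weightedNorm R _).trans <|
      (weightedNorm_compRemainder_le (one_le_approxRootBound _ _) hGM a _).trans ?_
    simpa only [hf] using Nat.mul_le_mul_left _ (weightedNorm_scaleRoots_le f (a ^ 2))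
  · have hsK : (s : K) ≠ 0 := by push_cast [s]; exact mul_ne_zero (pow_ne_zero 2 haK) hLK
    have h : R.map (Int.castRingHom K) = 0 :=
      map_compRemainder_scaleRoots_eq_zero hG (by omega) haK hsK hLK hu hg hcomp
    simpa using congrArg (coeff · R.natDegree) h

theorem le_natAbs_of_intCast_eq_zero {K : Type*} [Ring K] (p : ℕ) [CharP K p] {z : ℤ}
    (hz : z ≠ 0) (h : (z : K) = 0) : p ≤ z.natAbs :=
  Nat.le_of_dvd (Int.natAbs_pos.mpr hz)
    (Int.natCast_dvd.mp ((CharP.intCast_eq_zero_iff K p z).mp h))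

theorem obstructionBound_le_sum {a b d : ℕ} (h : a * b = d) (hd : d ≠ 0) :
    obstructionBound a b ≤ ∑ a ∈ d.divisors, obstructionBound a (d / a) := by
  have ha : 0 < a := Nat.pos_of_ne_zero (by rintro rfl; omega)
  rw [show b = d / a by rw [← h, Nat.mul_div_cancel_left _ ha]]
  exact single_le_sum (f := fun a => obstructionBound a (d / a)) (by simp)
    (Nat.mem_divisors.mpr ⟨Dvd.intro _ h, hd⟩)

theorem reduction_mod_p_indecomposable (d : ℕ) (hd : 2 ≤ d) :
    ∃ γ : ℝ, 0 < γ ∧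
      ∀ f : Polynomial ℤ, f.natDegree = d →
        IndecomposablePoly (f.map (Int.castRingHom ℚ)) →
        ∀ (p : ℕ) [Fact p.Prime],
          γ * (intMaxNorm f : ℝ) ^ d < (p : ℝ) →
          IndecomposablePoly
            (f.map (Int.castRingHom (AlgebraicClosure (ZMod p)))) := by
  set γ := d + ∑ a ∈ d.divisors, obstructionBound a (d / a)
  refine ⟨γ, by positivity, fun f hfd hind p _ hp => ?_⟩
  set K := AlgebraicClosure (ZMod p)
  have hp' : γ * intMaxNorm f ^ d < p := by exact_mod_cast hp
  have hL : f.leadingCoeff ≠ 0 :=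
    leadingCoeff_ne_zero.mpr (ne_zero_of_natDegree_gt (n := 0) (by omega))
  have hLμ : f.leadingCoeff.natAbs ≤ intMaxNorm f := natAbs_coeff_le_intMaxNorm f _
  have hμγ : intMaxNorm f ≤ γ * intMaxNorm f ^ d :=
    (Nat.le_self_pow (by omega) _).trans (Nat.le_mul_of_pos_left _ (by omega))
  have hdγ : d ≤ γ * intMaxNorm f ^ d := (Nat.le_add_right d _).trans
    (Nat.le_mul_of_pos_right γ (pow_pos ((Int.natAbs_pos.mpr hL).trans_le hLμ) d))
  have hLK : (f.leadingCoeff : K) ≠ 0 := fun h => by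
    have := le_natAbs_of_intCast_eq_zero p hL h; omega
  have hdegK : (f.map (Int.castRingHom K)).natDegree = d := by
    rw [natDegree_map_of_leadingCoeff_ne_zero _ (by simpa using hLK), hfd]
  refine ⟨Nat.lt_of_lt_of_le (by omega : 0 < d) hdegK.ge, ?_⟩
  rintro ⟨u, g, hu, hg, hcomp⟩
  have hdeg : u.natDegree * g.natDegree = d := by rw [← hdegK, hcomp, natDegree_comp]
  obtain ⟨N, hN0, hNle, hNK⟩ := exists_obstruction hu hg (hfd.trans hdeg.symm) hind
  have haK : (u.natDegree : K) ≠ 0 := fun h => by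
    have := Nat.le_of_dvd (by omega) ((CharP.cast_eq_zero_iff K p _).mp h); nlinarith
  have hpN := le_natAbs_of_intCast_eq_zero p hN0 (hNK K haK hLK u g rfl rfl hcomp)
  have hγ := (obstructionBound_le_sum hdeg (by omega)).trans (Nat.le_add_left _ d)
  rw [hdeg] at hNle
  exact absurd (hpN.trans (hNle.trans (Nat.mul_le_mul_right _ hγ))) (not_le.mpr hp')
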